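/- Let f : A → B be a ring homomorphism. Suppose that A is isomorphic to a direct summand of B as an A-bimodule, and that B is flat as a right A-module. If B is right regular (in the sense of Vogel), then A is right regular too. -/

import Mathlib

universe u

open CategoryTheory CategoryTheory.Limits

/-- A class of `R`-modules is stable under filtered colimits if, for every
filtered diagram of modules all of whose objects belong to the class, the
colimit (i.e. the point of any colimit cocone) again belongs to the class. -/
def StableUnderFilteredColimits (R : Type u) [Ring R] (S : Set (ModuleCat.{u} R)) : Prop :=
  ∀ (J : Type u) (_ : SmallCategory J) (_ : IsFiltered J)
    (F : J ⥤ ModuleCat.{u} R) (c : Cocone F), IsColimit c →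
    (∀ j : J, F.obj j ∈ S) → c.pt ∈ S

/-- The 2/3 axiom: for every short exact sequence `0 → M → N → P → 0`, if two of the
three modules belong to the class, then so does the third. -/
def SatisfiesTwoOfThree (R : Type u) [Ring R] (S : Set (ModuleCat.{u} R)) : Prop :=
  ∀ (M N P : ModuleCat.{u} R) (f : M →ₗ[R] N) (g : N →ₗ[R] P),
    Function.Injective f → Function.Surjective g → Function.Exact f g →
      ((M ∈ S → N ∈ S → P ∈ S) ∧ (M ∈ S → P ∈ S → N ∈ S) ∧ (N ∈ S → P ∈ S → M ∈ S))

/-- A class of `R`-modules is exact if it is stable under filtered colimits and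
satisfies the 2/3 axiom. -/
def IsExactClass (R : Type u) [Ring R] (S : Set (ModuleCat.{u} R)) : Prop :=
  StableUnderFilteredColimits R S ∧ SatisfiesTwoOfThree R S

/-- An `R`-module is regular (in the sense of Vogel) if it belongs to every exact class
containing the module `R` itself (i.e. to the smallest such class). -/
def IsRegularModule (R : Type u) [Ring R] (M : ModuleCat.{u} R) : Prop :=
  ∀ S : Set (ModuleCat.{u} R), IsExactClass R S → ModuleCat.of R R ∈ S → M ∈ S

/-- A ring `R` is regular in the sense of Vogel if every `R`-module is regular,
i.e. every exact class of `R`-modules containing `R` contains all `R`-modules. -/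
def IsVogelRegular (R : Type u) [Ring R] : Prop :=
  ∀ M : ModuleCat.{u} R, IsRegularModule R M

/-- A ring is right regular (in the sense of Vogel) if the opposite ring is regular for
left modules, i.e. the category of right `R`-modules (= left `Rᵐᵒᵖ`-modules) has the
Vogel regularity property. -/
def IsVogelRightRegular (R : Type u) [Ring R] : Prop := IsVogelRegular Rᵐᵒᵖ

/-- A module is flat iff it is a filtered colimit of finitely generated free modules
(Lazard's theorem); we take this characterization as the definition of flatness,
which makes sense over an arbitrary (possibly non-commutative) ring. -/
def IsLazardFlat (R : Type u) [Ring R] (M : Type u) [AddCommGroup M] [Module R M] : Prop :=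
  ∃ (J : Type u) (_ : SmallCategory J) (_ : IsFiltered J)
    (F : J ⥤ ModuleCat.{u} R) (c : Cocone F) (_ : IsColimit c),
    (∀ j : J, ∃ n : ℕ, Nonempty ((F.obj j) ≃ₗ[R] (Fin n → R))) ∧
    Nonempty (c.pt ≃ₗ[R] M)

/-!
Restriction of scalars along `Aᵐᵒᵖ → Bᵐᵒᵖ` is exact and preserves colimits, so it pulls an exact
class `S` of right `A`-modules back to an exact class of right `B`-modules. If `S` contains `A`, it
contains the finite free modules and hence, by Lazard flatness, `B` itself; by regularity of `B` it
then contains the restriction of every right `B`-module. Since `A` is an `A`-bimodule summand of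
`B`, every right `A`-module `M` is a retract of the restriction of the coinduced module
`Hom_A(B, M)`. Finally, exact classes are closed under retracts: a retract of `N` is the colimit
of the sequence `N → N → ⋯` whose maps are all the associated idempotent.
-/

namespace CategoryTheory

variable {C : Type*} [Category* C] {X Y : C}

def Retract.sequenceCocone (h : Retract X Y) :
    Cocone (Functor.ofSequence fun _ : ℕ => h.r ≫ h.i) where
  pt := X
  ι := NatTrans.ofSequence (fun _ => h.r) fun _ => by
    rw [Functor.ofSequence_map_homOfLE_succ]
    exact (Category.assoc _ _ _).trans (h.r ≫= h.retract)

lemma Limits.Cocone.ofSequence_idempotent_comp_ι_app_zero {e : Y ⟶ Y} (he : e ≫ e = e)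
    (t : Cocone (Functor.ofSequence fun _ : ℕ => e)) (n : ℕ) :
    e ≫ (t.ι.app 0 : Y ⟶ t.pt) = t.ι.app n := by
  have hw (n : ℕ) : e ≫ (t.ι.app (n + 1) : Y ⟶ t.pt) = t.ι.app n := by
    have := t.w (homOfLE (Nat.le_add_right n 1))
    rwa [Functor.ofSequence_map_homOfLE_succ] at this
  have hinv (n : ℕ) : e ≫ (t.ι.app n : Y ⟶ t.pt) = t.ι.app n := by
    rw [← hw n]
    exact (Category.assoc _ _ _).symm.trans (congrArg (· ≫ _) he)
  rw [hinv]
  induction n with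
  | zero => rfl
  | succ n ih => rw [ih, ← hw n, hinv]

def Retract.isColimitSequenceCocone (h : Retract X Y) : IsColimit h.sequenceCocone where
  desc t := h.i ≫ t.ι.app 0
  fac t n := (Category.assoc _ _ _).symm.trans
    (Cocone.ofSequence_idempotent_comp_ι_app_zero (by simp) t n)
  uniq t m hm := by
    rw [← hm 0]
    exact (h.retract_assoc m).symm

end CategoryTheory

section

variable {R : Type u} [Ring R] {S : Set (ModuleCat.{u} R)}

namespace StableUnderFilteredColimits

lemma mem_of_isColimit (hS : StableUnderFilteredColimits R S) {J : Type} [SmallCategory J]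
    [IsFiltered J] {F : J ⥤ ModuleCat.{u} R} {c : Cocone F} (hc : IsColimit c)
    (hF : ∀ j, F.obj j ∈ S) : c.pt ∈ S :=
  hS (AsSmall.{u} J) inferInstance (IsFiltered.of_equivalence AsSmall.equiv) _ _
    (hc.whiskerEquivalence AsSmall.equiv.symm) fun _ => hF _

lemma mem_of_retract (hS : StableUnderFilteredColimits R S) {M N : ModuleCat.{u} R}
    (h : Retract M N) (hN : N ∈ S) : M ∈ S :=
  hS.mem_of_isColimit h.isColimitSequenceCocone fun _ => hN

lemma mem_of_iso (hS : StableUnderFilteredColimits R S) {M N : ModuleCat.{u} R} (e : M ≅ N)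
    (hM : M ∈ S) : N ∈ S :=
  hS.mem_of_retract e.symm.retract hM

end StableUnderFilteredColimits

namespace IsExactClass

lemma pi_fin_mem (hS : IsExactClass R S) (hR : ModuleCat.of R R ∈ S) (n : ℕ) :
    ModuleCat.of R (Fin n → R) ∈ S := by
  induction n with
  | zero =>
    refine (hS.2 _ _ (ModuleCat.of R (Fin 0 → R)) LinearMap.id 0 Function.injective_id
      (fun _ => ⟨0, Subsingleton.elim _ _⟩) fun _ => by simp).1 hR hR
  | succ n ih =>
    have hprod : ModuleCat.of R (R × (Fin n → R)) ∈ S :=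
      (hS.2 _ _ _ (LinearMap.inl R R _) (LinearMap.snd R R _) LinearMap.inl_injective
        LinearMap.snd_surjective Function.Exact.inl_snd).2.1 hR ih
    exact hS.1.mem_of_iso (Fin.consLinearEquiv R fun _ => R).toModuleIso hprod

lemma mem_of_isLazardFlat (hS : IsExactClass R S) (hR : ModuleCat.of R R ∈ S) {M : Type u}
    [AddCommGroup M] [Module R M] (hM : IsLazardFlat R M) : ModuleCat.of R M ∈ S := by
  obtain ⟨J, _, _, F, c, hc, hfree, ⟨e⟩⟩ := hM
  have hF (j : J) : F.obj j ∈ S := by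
    obtain ⟨n, ⟨e⟩⟩ := hfree j
    exact hS.1.mem_of_iso e.symm.toModuleIso (hS.pi_fin_mem hR n)
  exact hS.1.mem_of_iso e.toModuleIso (hS.1 J ‹_› ‹_› F c hc hF)

lemma preimage_restrictScalars (hS : IsExactClass R S) {R' : Type u} [Ring R'] (g : R →+* R') :
    IsExactClass R' ((ModuleCat.restrictScalars.{u} g).obj ⁻¹' S) := by
  refine ⟨fun J _ _ F c hc hF => ?_, fun M N P φ ψ hφ hψ hφψ => ?_⟩
  · exact hS.1 J _ ‹_› _ _ (isColimitOfPreserves (ModuleCat.restrictScalars g) hc) hF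
  · exact hS.2 _ _ _ ((ModuleCat.restrictScalars g).map (ModuleCat.ofHom φ)).hom
      ((ModuleCat.restrictScalars g).map (ModuleCat.ofHom ψ)).hom hφ hψ hφψ

end IsExactClass

namespace ModuleCat

variable {R' : Type u} [Ring R'] (g : R →+* R') {p : R' →+ R} {e : R'}

noncomputable def retractRestrictCoextendScalars
    (hp : ∀ (a : R) (y : R') (a' : R), p (g a * y * g a') = a * p y * a')
    (he : ∀ a : R, g a * e = e * g a) (hpe : p e = 1) (M : ModuleCat.{u} R) :
    Retract M ((restrictScalars g).obj ((coextendScalars g).obj M)) where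
  i := ofHom (Y := (restrictScalars g).obj ((coextendScalars g).obj M))
    { toFun m := (CoextendScalars.equiv g M).symm
        { toFun (y : R') := p y • m
          map_add' (y y' : R') := by
            change p (y + y') • m = p y • m + p y' • m
            rw [map_add, add_smul]
          map_smul' a (y : R') := by
            change p (g a * y) • m = a • p y • m
            simpa [mul_smul] using congrArg (· • m) (hp a y 1) }
      map_add' m m' := (CoextendScalars.equiv g M).injective <| LinearMap.ext fun (y : R') => by
        change p y • (m + m') = p y • m + p y • m'
        rw [smul_add]
      map_smul' a m := (CoextendScalars.equiv g M).injective <| LinearMap.ext fun (y : R') => by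
        change p y • a • m = p (y * g a) • m
        simpa [mul_smul] using congrArg (· • m) (hp 1 y a).symm }
  r := ofHom (X := (restrictScalars g).obj ((coextendScalars g).obj M))
    { toFun φ := CoextendScalars.equiv g M φ e
      map_add' _ _ := rfl
      map_smul' a φ := by
        change CoextendScalars.equiv g M φ (e * g a) = a • CoextendScalars.equiv g M φ e
        rw [← he]
        exact (CoextendScalars.equiv g M φ).map_smul a e }
  retract := by
    ext m
    change p e • m = m
    rw [hpe, one_smul]

end ModuleCat

end

/-- let `f : A → B` be a ring homomorphism such that `A` is a direct
summand of `B` as an `A`-bimodule (witnessed by a bimodule inclusion `i` and a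
bimodule retraction `p`), and such that `B` is flat as a right `A`-module
(i.e. as a left `Aᵐᵒᵖ`-module, for the action `aᵒᵖ • b = b * f a`).
If `B` is right regular in the sense of Vogel, then so is `A`. -/
theorem isVogelRightRegular_of_bimodule_summand
    (A B : Type u) [Ring A] [Ring B] (f : A →+* B)
    (i : A →+ B) (p : B →+ A)
    (hi : ∀ a x a' : A, i (a * x * a') = f a * i x * f a')
    (hp : ∀ (a : A) (y : B) (a' : A), p (f a * y * f a') = a * p y * a')
    (hpi : ∀ x : A, p (i x) = x)
    (hflat : @IsLazardFlat Aᵐᵒᵖ _ B _ (Module.compHom B (RingHom.op f)))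
    (hB : IsVogelRightRegular B) :
    IsVogelRightRegular A := by
  intro M S hS hA
  let _ : Module Aᵐᵒᵖ B := Module.compHom B f.op
  let eB : B ≃ₗ[Aᵐᵒᵖ] (ModuleCat.restrictScalars f.op).obj (ModuleCat.of Bᵐᵒᵖ Bᵐᵒᵖ) :=
    { MulOpposite.opAddEquiv with map_smul' _ _ := rfl }
  have hBS : (ModuleCat.restrictScalars f.op).obj (ModuleCat.of Bᵐᵒᵖ Bᵐᵒᵖ) ∈ S :=
    hS.1.mem_of_iso eB.toModuleIso (hS.mem_of_isLazardFlat hA hflat)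
  have hrestrict (N : ModuleCat.{u} Bᵐᵒᵖ) : (ModuleCat.restrictScalars f.op).obj N ∈ S :=
    hB N _ (hS.preimage_restrictScalars f.op) hBS
  have hi_comm (a : A) : f a * i 1 = i 1 * f a := by
    calc f a * i 1 = i a := by simpa using (hi a 1 1).symm
      _ = i 1 * f a := by simpa using hi 1 1 a
  refine hS.1.mem_of_retract (ModuleCat.retractRestrictCoextendScalars f.op
    (p := p.mulOp) (e := MulOpposite.op (i 1)) (fun a y a' => ?_) (fun a => ?_) ?_ M) (hrestrict _)
  · simpa [mul_assoc] using congrArg MulOpposite.op (hp a'.unop y.unop a.unop)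
  · simpa using congrArg MulOpposite.op (hi_comm a.unop).symm
  · simp [hpi]
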